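/- arXiv:2411.06580 — 6 statements merged into one kernel-verified Lean document; each statement's English description precedes it below -/
import Mathlib

section
/- Let E be a finite-dimensional real inner product space with 2 ≤ dim E, let u ∈ E with t := ⟪u,u⟫ > 0, and let a₁,a₂,a₃,b₁,b₂,b₃ ∈ ℝ. Then the F-natural bilinear form G on E × E is positive definite if and only if a₁ > 0, α > 0, φ₁ > 0 and φ > 0. -/
/-!
Write `X = Y + (p • u, q • u)` with both components of `Y` orthogonal to `u`. The `b`-terms only
see the `u`-direction, so `G(X, X)` splits as the form of the matrix `[[a₁ + a₃, a₂], [a₂, a₁]]`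
evaluated on `Y` plus the form of `[[φ₁₃, φ₂], [φ₂, φ₁]]` evaluated on `(p • u, q • u)`. Hence `G`
is positive definite iff both `2 × 2` blocks are, which by completing the square means
`a₁ > 0, α > 0` and `φ₁ > 0, φ > 0`. The first block can be tested on a nonzero vector orthogonal
to `u`, which exists since `dim E ≥ 2`.
-/

/-- The pointwise F-natural bilinear form on `E × E` determined by the six constants
`a₁, a₂, a₃, b₁, b₂, b₃` and the base vector `u`. -/
noncomputable def FNatForm {E : Type*} [NormedAddCommGroup E] [InnerProductSpace ℝ E]
    (u : E) (a₁ a₂ a₃ b₁ b₂ b₃ : ℝ) (X Y : E × E) : ℝ :=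
  (a₁ + a₃) * (inner ℝ X.1 Y.1 : ℝ) + (b₁ + b₃) * (inner ℝ X.1 u : ℝ) * (inner ℝ Y.1 u : ℝ)
    + a₂ * ((inner ℝ X.1 Y.2 : ℝ) + (inner ℝ X.2 Y.1 : ℝ))
    + b₂ * ((inner ℝ X.1 u : ℝ) * (inner ℝ Y.2 u : ℝ) + (inner ℝ X.2 u : ℝ) * (inner ℝ Y.1 u : ℝ))
    + a₁ * (inner ℝ X.2 Y.2 : ℝ) + b₁ * (inner ℝ X.2 u : ℝ) * (inner ℝ Y.2 u : ℝ)

open RealInnerProductSpace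

section PairQuadForm

variable {F : Type*} [NormedAddCommGroup F] [InnerProductSpace ℝ F]

-- `A` weighs the second component, as `a₁` does in `FNatForm`.
noncomputable def pairQuadForm (A B C : ℝ) (z : F × F) : ℝ :=
  A * ‖z.2‖ ^ 2 + 2 * B * ⟪z.1, z.2⟫ + C * ‖z.1‖ ^ 2

theorem mul_pairQuadForm (A B C : ℝ) (z : F × F) :
    A * pairQuadForm A B C z = ‖A • z.2 + B • z.1‖ ^ 2 + (A * C - B ^ 2) * ‖z.1‖ ^ 2 := by
  rw [pairQuadForm, norm_add_sq_real, norm_smul, norm_smul, real_inner_smul_left,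
    real_inner_smul_right, real_inner_comm, mul_pow, mul_pow, Real.norm_eq_abs, Real.norm_eq_abs,
    sq_abs, sq_abs]
  ring

variable {A B C : ℝ}

theorem pairQuadForm_nonneg (hA : 0 < A) (hD : 0 ≤ A * C - B ^ 2) (z : F × F) :
    0 ≤ pairQuadForm A B C z := by
  refine nonneg_of_mul_nonneg_right ?_ hA
  rw [mul_pairQuadForm]
  positivity

theorem pairQuadForm_pos (hA : 0 < A) (hD : 0 < A * C - B ^ 2) {z : F × F} (hz : z ≠ 0) :
    0 < pairQuadForm A B C z := by
  refine pos_of_mul_pos_right ?_ hA.le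
  rw [mul_pairQuadForm]
  obtain ⟨z₁, z₂⟩ := z
  rcases eq_or_ne z₁ 0 with rfl | h₁
  · have h₂ : z₂ ≠ 0 := by simpa using hz
    have : A • z₂ ≠ 0 := smul_ne_zero hA.ne' h₂
    simp only [smul_zero, add_zero, norm_zero]
    positivity
  · have := norm_pos_iff.mpr h₁
    positivity

theorem pairQuadForm_smul (A B C x y : ℝ) (e : F) :
    pairQuadForm A B C (x • e, y • e) = (A * y ^ 2 + 2 * B * x * y + C * x ^ 2) * ‖e‖ ^ 2 := by
  rw [pairQuadForm, norm_smul, norm_smul, real_inner_smul_left, real_inner_smul_right,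
    real_inner_self_eq_norm_sq, mul_pow, mul_pow, Real.norm_eq_abs, Real.norm_eq_abs,
    sq_abs, sq_abs]
  ring

theorem pos_of_pairQuadForm_smul_pos {e : F} (he : e ≠ 0)
    (h : ∀ x y : ℝ, (x, y) ≠ 0 → 0 < pairQuadForm A B C (x • e, y • e)) :
    0 < A ∧ 0 < A * C - B ^ 2 := by
  have he' : 0 < ‖e‖ ^ 2 := by positivity
  have hA : 0 < A := by
    have := h 0 1 (by simp)
    rw [pairQuadForm_smul] at this
    nlinarith [pos_of_mul_pos_left this he'.le]
  refine ⟨hA, ?_⟩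
  -- the test vector `(A e, -B e)` makes the cross term cancel the `A`-term
  have := h A (-B) (by simp [hA.ne'])
  rw [pairQuadForm_smul] at this
  have := pos_of_mul_pos_left this he'.le
  nlinarith

end PairQuadForm

theorem exists_ne_zero_inner_eq_zero {F : Type*} [NormedAddCommGroup F] [InnerProductSpace ℝ F]
    (hF : 2 ≤ Module.finrank ℝ F) (u : F) : ∃ v : F, v ≠ 0 ∧ ⟪v, u⟫ = 0 := by
  have hperp : (ℝ ∙ u)ᗮ ≠ ⊥ := by
    rw [Ne, Submodule.orthogonal_eq_bot_iff]
    intro htop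
    have := finrank_span_le_card (R := ℝ) ({u} : Set F)
    rw [htop, finrank_top] at this
    simp at this
    omega
  obtain ⟨v, hv, hv0⟩ := Submodule.exists_mem_ne_zero_of_ne_bot hperp
  exact ⟨v, hv0, Submodule.mem_orthogonal_singleton_iff_inner_left.mp hv⟩

theorem inner_sub_smul_div_eq_zero {F : Type*} [NormedAddCommGroup F] [InnerProductSpace ℝ F]
    (x : F) {u : F} (hu : ⟪u, u⟫ ≠ 0) : ⟪x - (⟪x, u⟫ / ⟪u, u⟫) • u, u⟫ = 0 := by
  rw [inner_sub_left, real_inner_smul_left, div_mul_cancel₀ _ hu, sub_self]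

section FNatForm

variable {E : Type*} [NormedAddCommGroup E] [InnerProductSpace ℝ E]

theorem FNatForm_add_smul (u : E) (a₁ a₂ a₃ b₁ b₂ b₃ : ℝ) {Y : E × E} (h₁ : ⟪Y.1, u⟫ = 0)
    (h₂ : ⟪Y.2, u⟫ = 0) (p q : ℝ) :
    FNatForm u a₁ a₂ a₃ b₁ b₂ b₃ (Y + (p • u, q • u)) (Y + (p • u, q • u)) =
      pairQuadForm a₁ a₂ (a₁ + a₃) Y +
        pairQuadForm (a₁ + ⟪u, u⟫ * b₁) (a₂ + ⟪u, u⟫ * b₂)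
          ((a₁ + a₃) + ⟪u, u⟫ * (b₁ + b₃)) (p • u, q • u) := by
  have h₁' : ⟪u, Y.1⟫ = 0 := by rw [real_inner_comm, h₁]
  have h₂' : ⟪u, Y.2⟫ = 0 := by rw [real_inner_comm, h₂]
  simp only [FNatForm, pairQuadForm, Prod.fst_add, Prod.snd_add, inner_add_left, inner_add_right,
    real_inner_smul_left, real_inner_smul_right, h₁, h₂, h₁', h₂', ← real_inner_self_eq_norm_sq,
    real_inner_comm Y.1 Y.2]
  ring

theorem FNatForm_self_of_inner_eq_zero (u : E) (a₁ a₂ a₃ b₁ b₂ b₃ : ℝ) {Y : E × E}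
    (h₁ : ⟪Y.1, u⟫ = 0) (h₂ : ⟪Y.2, u⟫ = 0) :
    FNatForm u a₁ a₂ a₃ b₁ b₂ b₃ Y Y = pairQuadForm a₁ a₂ (a₁ + a₃) Y := by
  simpa [pairQuadForm, Prod.mk_zero_zero] using
    FNatForm_add_smul u a₁ a₂ a₃ b₁ b₂ b₃ h₁ h₂ 0 0

theorem FNatForm_smul_self (u : E) (a₁ a₂ a₃ b₁ b₂ b₃ p q : ℝ) :
    FNatForm u a₁ a₂ a₃ b₁ b₂ b₃ (p • u, q • u) (p • u, q • u) =
      pairQuadForm (a₁ + ⟪u, u⟫ * b₁) (a₂ + ⟪u, u⟫ * b₂)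
        ((a₁ + a₃) + ⟪u, u⟫ * (b₁ + b₃)) (p • u, q • u) := by
  simpa [pairQuadForm] using
    FNatForm_add_smul u a₁ a₂ a₃ b₁ b₂ b₃ (Y := 0) (inner_zero_left _) (inner_zero_left _) p q

end FNatForm

theorem FNatForm_posDef_iff_general {E : Type*} [NormedAddCommGroup E] [InnerProductSpace ℝ E]
    (hdim : 2 ≤ Module.finrank ℝ E)
    (u : E) (ht : 0 < (inner ℝ u u : ℝ)) (a₁ a₂ a₃ b₁ b₂ b₃ : ℝ) :
    (∀ X : E × E, X ≠ 0 → 0 < FNatForm u a₁ a₂ a₃ b₁ b₂ b₃ X X) ↔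
      (0 < a₁ ∧ 0 < a₁ * (a₁ + a₃) - a₂ ^ 2 ∧
        0 < a₁ + (inner ℝ u u : ℝ) * b₁ ∧
        0 < (a₁ + (inner ℝ u u : ℝ) * b₁) * ((a₁ + a₃) + (inner ℝ u u : ℝ) * (b₁ + b₃))
            - (a₂ + (inner ℝ u u : ℝ) * b₂) ^ 2) := by
  constructor
  · intro hpos
    obtain ⟨v, hv, hvu⟩ := exists_ne_zero_inner_eq_zero hdim u
    have hu : u ≠ 0 := by rintro rfl; simp at ht
    have hperp := pos_of_pairQuadForm_smul_pos (A := a₁) (B := a₂) (C := a₁ + a₃) hv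
      fun x y hxy ↦ by
        rw [← FNatForm_self_of_inner_eq_zero u a₁ a₂ a₃ b₁ b₂ b₃
          (by simp [real_inner_smul_left, hvu]) (by simp [real_inner_smul_left, hvu])]
        exact hpos _ (by simpa [Prod.ext_iff, hv] using hxy)
    have hrad := pos_of_pairQuadForm_smul_pos hu fun x y hxy ↦ by
      rw [← FNatForm_smul_self]
      exact hpos _ (by simpa [Prod.ext_iff, hu] using hxy)
    exact ⟨hperp.1, hperp.2, hrad.1, hrad.2⟩
  · rintro ⟨hA, hα, hφ₁, hφ⟩ X hX
    obtain ⟨Y, h₁, h₂, p, q, rfl⟩ :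
        ∃ Y : E × E, ⟪Y.1, u⟫ = 0 ∧ ⟪Y.2, u⟫ = 0 ∧ ∃ p q : ℝ, X = Y + (p • u, q • u) :=
      ⟨_, inner_sub_smul_div_eq_zero X.1 ht.ne', inner_sub_smul_div_eq_zero X.2 ht.ne', _, _,
        (sub_add_cancel _ _).symm⟩
    rw [FNatForm_add_smul u a₁ a₂ a₃ b₁ b₂ b₃ h₁ h₂]
    rcases eq_or_ne Y 0 with rfl | hY
    · rw [zero_add] at hX
      exact add_pos_of_nonneg_of_pos (pairQuadForm_nonneg hA hα.le _) (pairQuadForm_pos hφ₁ hφ hX)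
    · exact add_pos_of_pos_of_nonneg (pairQuadForm_pos hA hα hY) (pairQuadForm_nonneg hφ₁ hφ.le _)

/-- Pointwise version of Proposition 1 (2): the F-natural form is positive definite iff
`a₁ > 0`, `α > 0`, `φ₁ > 0` and `φ > 0`, where `t = ⟪u,u⟫`, `φ₁ = a₁ + t b₁`,
`φ₂ = a₂ + t b₂`, `φ₁₃ = (a₁+a₃) + t(b₁+b₃)`, `α = a₁(a₁+a₃) − a₂²`, `φ = φ₁ φ₁₃ − φ₂²`. -/
theorem FNatForm_posDef_iff {E : Type*} [NormedAddCommGroup E] [InnerProductSpace ℝ E]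
    [FiniteDimensional ℝ E] (hdim : 2 ≤ Module.finrank ℝ E)
    (u : E) (ht : 0 < (inner ℝ u u : ℝ)) (a₁ a₂ a₃ b₁ b₂ b₃ : ℝ) :
    (∀ X : E × E, X ≠ 0 → 0 < FNatForm u a₁ a₂ a₃ b₁ b₂ b₃ X X) ↔
      (0 < a₁ ∧ 0 < a₁ * (a₁ + a₃) - a₂ ^ 2 ∧
        0 < a₁ + (inner ℝ u u : ℝ) * b₁ ∧
        0 < (a₁ + (inner ℝ u u : ℝ) * b₁) * ((a₁ + a₃) + (inner ℝ u u : ℝ) * (b₁ + b₃))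
            - (a₂ + (inner ℝ u u : ℝ) * b₂) ^ 2) :=
  FNatForm_posDef_iff_general hdim u ht a₁ a₂ a₃ b₁ b₂ b₃
end

section
/- Let E be a finite-dimensional real inner product space with 2 ≤ dim E, let u ∈ E with t := ⟪u,u⟫ > 0, and let a₁,a₂,a₃,b₁,b₂,b₃ ∈ ℝ. Then the F-natural bilinear form G on E × E is nondegenerate if and only if α ≠ 0 and φ ≠ 0. -/
section LinearSystem

variable {K M : Type*} [Field K] [AddCommGroup M] [Module K M]

theorem eq_zero_and_eq_zero_of_det_ne_zero {p q r s : K} (h : p * s - q * r ≠ 0) {x y : M}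
    (h₁ : p • x + q • y = 0) (h₂ : r • x + s • y = 0) : x = 0 ∧ y = 0 := by
  have hx : (p * s - q * r) • x = s • (p • x + q • y) - q • (r • x + s • y) := by module
  have hy : (p * s - q * r) • y = p • (r • x + s • y) - r • (p • x + q • y) := by module
  simp only [h₁, h₂, smul_zero, sub_zero, smul_eq_zero] at hx hy
  exact ⟨hx.resolve_left h, hy.resolve_left h⟩

theorem exists_ne_zero_of_det_eq_zero {p q r s : K} (h : p * s - q * r = 0) :
    ∃ c d : K, (c ≠ 0 ∨ d ≠ 0) ∧ p * c + q * d = 0 ∧ r * c + s * d = 0 := by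
  obtain ⟨v, hv, hMv⟩ := Matrix.exists_mulVec_eq_zero_iff.mpr
    (by rwa [Matrix.det_fin_two_of] : (!![p, q; r, s]).det = 0)
  refine ⟨v 0, v 1, ?_, ?_, ?_⟩
  · by_contra! h0
    exact hv (by ext i; fin_cases i <;> simp [h0])
  · simpa [Matrix.mulVec, dotProduct, Fin.sum_univ_two] using congrFun hMv 0
  · simpa [Matrix.mulVec, dotProduct, Fin.sum_univ_two] using congrFun hMv 1

theorem Prod.mk_smul_ne_zero {w : M} (hw : w ≠ 0) {c d : K} (hcd : c ≠ 0 ∨ d ≠ 0) :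
    (c • w, d • w) ≠ (0 : M × M) := by
  simp only [ne_eq, Prod.mk_eq_zero, smul_eq_zero, hw, or_false, not_and_or]
  exact hcd

end LinearSystem

theorem exists_ne_zero_inner_eq_zero_s7 {𝕜 E : Type*} [RCLike 𝕜] [NormedAddCommGroup E]
    [InnerProductSpace 𝕜 E] [FiniteDimensional 𝕜 E] (hE : 2 ≤ Module.finrank 𝕜 E) (u : E) :
    ∃ w : E, w ≠ 0 ∧ inner 𝕜 w u = 0 := by
  obtain ⟨w, hw, hw0⟩ := Submodule.exists_mem_ne_zero_of_ne_bot (p := (𝕜 ∙ u)ᗮ) fun hbot => by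
    have hsum := Submodule.finrank_add_finrank_orthogonal (𝕜 ∙ u)
    have hu := finrank_span_le_card (R := 𝕜) ({u} : Set E)
    rw [hbot, finrank_bot] at hsum
    rw [Set.toFinset_singleton, Finset.card_singleton] at hu
    omega
  exact ⟨w, hw0, Submodule.mem_orthogonal_singleton_iff_inner_left.mp hw⟩

section FNatForm

variable {E : Type*} [NormedAddCommGroup E] [InnerProductSpace ℝ E] (u : E) (a₁ a₂ a₃ b₁ b₂ b₃ : ℝ)

theorem FNatForm_comm (X Y : E × E) :
    FNatForm u a₁ a₂ a₃ b₁ b₂ b₃ X Y = FNatForm u a₁ a₂ a₃ b₁ b₂ b₃ Y X := by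
  simp only [FNatForm, real_inner_comm X.1 Y.1, real_inner_comm X.1 Y.2, real_inner_comm X.2 Y.1,
    real_inner_comm X.2 Y.2]
  ring

theorem FNatForm_apply_smul_self (X : E × E) (c d : ℝ) :
    FNatForm u a₁ a₂ a₃ b₁ b₂ b₃ X (c • u, d • u) =
      c * (((a₁ + a₃) + inner ℝ u u * (b₁ + b₃)) * inner ℝ X.1 u
        + (a₂ + inner ℝ u u * b₂) * inner ℝ X.2 u)
      + d * ((a₂ + inner ℝ u u * b₂) * inner ℝ X.1 u
        + (a₁ + inner ℝ u u * b₁) * inner ℝ X.2 u) := by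
  simp only [FNatForm, inner_smul_right, real_inner_smul_left]
  ring

theorem FNatForm_of_inner_eq_zero {X : E × E} (h₁ : inner ℝ X.1 u = 0) (h₂ : inner ℝ X.2 u = 0)
    (Y : E × E) :
    FNatForm u a₁ a₂ a₃ b₁ b₂ b₃ X Y =
      inner ℝ ((a₁ + a₃) • X.1 + a₂ • X.2) Y.1 + inner ℝ (a₂ • X.1 + a₁ • X.2) Y.2 := by
  simp only [FNatForm, h₁, h₂, inner_add_left, real_inner_smul_left]
  ring

variable {u a₁ a₂ a₃ b₁ b₂ b₃}

theorem FNatForm_smul_eq_zero_of_inner_eq_zero {w : E} (hw : inner ℝ w u = 0) {c d : ℝ}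
    (h₁ : (a₁ + a₃) * c + a₂ * d = 0) (h₂ : a₂ * c + a₁ * d = 0) (Y : E × E) :
    FNatForm u a₁ a₂ a₃ b₁ b₂ b₃ (c • w, d • w) Y = 0 := by
  rw [FNatForm_of_inner_eq_zero u _ _ _ _ _ _ (by simp [real_inner_smul_left, hw])
    (by simp [real_inner_smul_left, hw])]
  have e₁ : (a₁ + a₃) • c • w + a₂ • d • w = ((a₁ + a₃) * c + a₂ * d) • w := by module
  have e₂ : a₂ • c • w + a₁ • d • w = (a₂ * c + a₁ * d) • w := by module
  simp [e₁, e₂, h₁, h₂]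

theorem FNatForm_smul_self_eq_zero {c d : ℝ}
    (h₁ : ((a₁ + a₃) + inner ℝ u u * (b₁ + b₃)) * c + (a₂ + inner ℝ u u * b₂) * d = 0)
    (h₂ : (a₂ + inner ℝ u u * b₂) * c + (a₁ + inner ℝ u u * b₁) * d = 0) (Y : E × E) :
    FNatForm u a₁ a₂ a₃ b₁ b₂ b₃ (c • u, d • u) Y = 0 := by
  rw [FNatForm_comm, FNatForm_apply_smul_self]
  linear_combination inner ℝ Y.1 u * h₁ + inner ℝ Y.2 u * h₂

theorem inner_eq_zero_of_FNatForm_eq_zero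
    (hφ : (a₁ + inner ℝ u u * b₁) * ((a₁ + a₃) + inner ℝ u u * (b₁ + b₃))
      - (a₂ + inner ℝ u u * b₂) ^ 2 ≠ 0)
    {X : E × E} (hX : ∀ Y, FNatForm u a₁ a₂ a₃ b₁ b₂ b₃ X Y = 0) :
    inner ℝ X.1 u = 0 ∧ inner ℝ X.2 u = 0 := by
  have e₁ := hX ((1 : ℝ) • u, (0 : ℝ) • u)
  have e₂ := hX ((0 : ℝ) • u, (1 : ℝ) • u)
  simp only [FNatForm_apply_smul_self, one_mul, zero_mul, add_zero, zero_add] at e₁ e₂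
  exact eq_zero_and_eq_zero_of_det_ne_zero (p := (a₁ + a₃) + inner ℝ u u * (b₁ + b₃))
    (q := a₂ + inner ℝ u u * b₂) (r := a₂ + inner ℝ u u * b₂) (s := a₁ + inner ℝ u u * b₁)
    (by convert hφ using 1; ring) e₁ e₂

theorem eq_zero_of_FNatForm_eq_zero_of_inner_eq_zero (hα : a₁ * (a₁ + a₃) - a₂ ^ 2 ≠ 0)
    {X : E × E} (h₁ : inner ℝ X.1 u = 0) (h₂ : inner ℝ X.2 u = 0)
    (hX : ∀ Y, FNatForm u a₁ a₂ a₃ b₁ b₂ b₃ X Y = 0) : X = 0 := by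
  simp only [FNatForm_of_inner_eq_zero u _ _ _ _ _ _ h₁ h₂] at hX
  have hv := hX ((a₁ + a₃) • X.1 + a₂ • X.2, 0)
  have hw := hX (0, a₂ • X.1 + a₁ • X.2)
  simp only [inner_zero_right, add_zero, zero_add, inner_self_eq_zero] at hv hw
  obtain ⟨hX₁, hX₂⟩ := eq_zero_and_eq_zero_of_det_ne_zero
    (p := a₁ + a₃) (q := a₂) (r := a₂) (s := a₁) (by convert hα using 1; ring) hv hw
  exact Prod.ext hX₁ hX₂

end FNatForm

/-- Pointwise version of Proposition 1 (1): the F-natural form is nondegenerate iff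
`α ≠ 0` and `φ ≠ 0`, where `t = ⟪u,u⟫`, `α = a₁(a₁+a₃) − a₂²` and
`φ = (a₁ + t b₁)((a₁+a₃) + t(b₁+b₃)) − (a₂ + t b₂)²`. -/
theorem FNatForm_nondegenerate_iff {E : Type*} [NormedAddCommGroup E] [InnerProductSpace ℝ E]
    [FiniteDimensional ℝ E] (hdim : 2 ≤ Module.finrank ℝ E)
    (u : E) (ht : 0 < (inner ℝ u u : ℝ)) (a₁ a₂ a₃ b₁ b₂ b₃ : ℝ) :
    (∀ X : E × E, (∀ Y : E × E, FNatForm u a₁ a₂ a₃ b₁ b₂ b₃ X Y = 0) → X = 0) ↔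
      (a₁ * (a₁ + a₃) - a₂ ^ 2 ≠ 0 ∧
        (a₁ + (inner ℝ u u : ℝ) * b₁) * ((a₁ + a₃) + (inner ℝ u u : ℝ) * (b₁ + b₃))
            - (a₂ + (inner ℝ u u : ℝ) * b₂) ^ 2 ≠ 0) := by
  refine ⟨fun hnd => ⟨fun hα => ?_, fun hφ => ?_⟩, fun ⟨hα, hφ⟩ X hX => ?_⟩
  · obtain ⟨w, hw, hwu⟩ := exists_ne_zero_inner_eq_zero_s7 hdim u
    obtain ⟨c, d, hcd, h₁, h₂⟩ :=
      exists_ne_zero_of_det_eq_zero (p := a₁ + a₃) (q := a₂) (r := a₂) (s := a₁)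
        (by linear_combination hα)
    exact Prod.mk_smul_ne_zero hw hcd (hnd _ (FNatForm_smul_eq_zero_of_inner_eq_zero hwu h₁ h₂))
  · have hu : u ≠ 0 := fun h => by simp [h] at ht
    obtain ⟨c, d, hcd, h₁, h₂⟩ := exists_ne_zero_of_det_eq_zero
      (p := (a₁ + a₃) + inner ℝ u u * (b₁ + b₃)) (q := a₂ + inner ℝ u u * b₂)
      (r := a₂ + inner ℝ u u * b₂) (s := a₁ + inner ℝ u u * b₁) (by linear_combination hφ)
    exact Prod.mk_smul_ne_zero hu hcd (hnd _ (FNatForm_smul_self_eq_zero h₁ h₂))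
  · obtain ⟨h₁, h₂⟩ := inner_eq_zero_of_FNatForm_eq_zero hφ hX
    exact eq_zero_of_FNatForm_eq_zero_of_inner_eq_zero hα h₁ h₂ hX
end

section
/- Let φ₁, φ₂ : (0,∞) → ℝ be continuously differentiable such that for every t > 0 not both φ₁(t) = 0 and φ₂(t) = 0, and suppose 2·φ₁(t)·φ₂'(t) = φ₂(t)·φ₁'(t) for all t > 0. Then either φ₂(t) = 0 for all t > 0, or φ₂(t) ≠ 0 for all t > 0. -/
/-!
Wherever `φ₁ ≠ 0`, the relation `2 φ₁ φ₂' = φ₂ φ₁'` says exactly that `(φ₂² / φ₁)' = 0`. At a zero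
of `φ₂` we have `φ₁ ≠ 0`, so `φ₂² / φ₁` stays `0` nearby and `φ₂` vanishes on a neighbourhood: the
zero set of `φ₂` is open, as well as closed, in the connected set `(0, ∞)`.
-/

open Filter Topology Set

theorem HasDerivAt.sq_div_eq_zero {𝕜 : Type*} [NontriviallyNormedField 𝕜] {f g : 𝕜 → 𝕜}
    {f' g' t : 𝕜} (hf : HasDerivAt f f' t) (hg : HasDerivAt g g' t) (hgt : g t ≠ 0)
    (hfg : 2 * g t * f' = f t * g') :
    HasDerivAt (fun x => f x ^ 2 / g x) 0 t := by
  refine ((hf.pow 2).div hg hgt).congr_deriv ?_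
  rw [div_eq_zero_iff, Pi.pow_apply]
  left
  push_cast
  linear_combination f t * hfg

theorem eventually_eq_zero_of_two_mul_deriv_eq {𝕜 : Type*} [RCLike 𝕜] {f g f' g' : 𝕜 → 𝕜}
    {t₀ : 𝕜}
    (hderiv : ∀ᶠ t in 𝓝 t₀,
      HasDerivAt f (f' t) t ∧ HasDerivAt g (g' t) t ∧ 2 * g t * f' t = f t * g' t)
    (hg : g t₀ ≠ 0) (hf : f t₀ = 0) :
    ∀ᶠ t in 𝓝 t₀, f t = 0 := by
  have hg_ne : ∀ᶠ t in 𝓝 t₀, g t ≠ 0 :=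
    hderiv.self_of_nhds.2.1.continuousAt.eventually_ne hg
  obtain ⟨ε, hε, hball⟩ := Metric.eventually_nhds_iff_ball.1 (hderiv.and hg_ne)
  have hquot : ∀ t ∈ Metric.ball t₀ ε, HasDerivAt (fun x => f x ^ 2 / g x) 0 t :=
    fun t ht => let ⟨⟨hf', hg', hfg⟩, hgt⟩ := hball t ht; hf'.sq_div_eq_zero hg' hgt hfg
  have hconst : ∀ t ∈ Metric.ball t₀ ε, f t ^ 2 / g t = f t₀ ^ 2 / g t₀ := fun t ht =>
    Metric.isOpen_ball.is_const_of_deriv_eq_zero (convex_ball t₀ ε).isPreconnected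
      (fun s hs => (hquot s hs).differentiableAt.differentiableWithinAt)
      (fun s hs => (hquot s hs).deriv) ht (Metric.mem_ball_self hε)
  filter_upwards [Metric.ball_mem_nhds t₀ hε] with t ht
  have hzero : f t ^ 2 / g t = 0 := by rw [hconst t ht, hf]; simp
  simpa [(hball t ht).2] using hzero

theorem IsPreconnected.forall_eq_or_forall_ne {X Y : Type*} [TopologicalSpace X]
    [TopologicalSpace Y] [T1Space Y] {s : Set X} {f : X → Y} {c : Y}
    (hs : IsPreconnected s) (hso : IsOpen s) (hf : ContinuousOn f s)
    (hloc : ∀ x ∈ s, f x = c → ∀ᶠ y in 𝓝 x, f y = c) :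
    (∀ x ∈ s, f x = c) ∨ (∀ x ∈ s, f x ≠ c) := by
  have hu : IsOpen {x | ∀ᶠ y in 𝓝 x, f y = c} := isOpen_setOfPred_eventually_nhds
  have hv : IsOpen (s ∩ f ⁻¹' {c}ᶜ) := hf.isOpen_inter_preimage hso isOpen_compl_singleton
  have hdisj : Disjoint {x | ∀ᶠ y in 𝓝 x, f y = c} (s ∩ f ⁻¹' {c}ᶜ) :=
    Set.disjoint_left.2 fun x hx hx' => hx'.2 hx.self_of_nhds
  have hcover : s ⊆ {x | ∀ᶠ y in 𝓝 x, f y = c} ∪ (s ∩ f ⁻¹' {c}ᶜ) := fun x hx =>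
    (em (f x = c)).imp (hloc x hx) fun hne => ⟨hx, hne⟩
  exact (hs.subset_or_subset hu hv hdisj hcover).imp (fun h x hx => (h hx).self_of_nhds)
    fun h x hx => (h hx).2

/-- Dichotomy lemma from the totally geodesic fibers theorem: if `φ₁` and `φ₂` are `C¹` on
`(0,∞)`, never vanish simultaneously there, and satisfy `2 φ₁ φ₂' = φ₂ φ₁'`, then either
`φ₂` vanishes identically on `(0,∞)` or it never vanishes there. -/
theorem phi2_dichotomy (φ₁ φ₂ : ℝ → ℝ)
    (h₁ : ContDiffOn ℝ 1 φ₁ (Set.Ioi 0))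
    (h₂ : ContDiffOn ℝ 1 φ₂ (Set.Ioi 0))
    (hne : ∀ t : ℝ, 0 < t → ¬(φ₁ t = 0 ∧ φ₂ t = 0))
    (hode : ∀ t : ℝ, 0 < t → 2 * φ₁ t * deriv φ₂ t = φ₂ t * deriv φ₁ t) :
    (∀ t : ℝ, 0 < t → φ₂ t = 0) ∨ (∀ t : ℝ, 0 < t → φ₂ t ≠ 0) := by
  have hderiv : ∀ φ : ℝ → ℝ, ContDiffOn ℝ 1 φ (Ioi 0) → ∀ t : ℝ, 0 < t →
      HasDerivAt φ (deriv φ t) t := fun φ hφ t ht =>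
    ((hφ.differentiableOn one_ne_zero).differentiableAt (Ioi_mem_nhds ht)).hasDerivAt
  refine isPreconnected_Ioi.forall_eq_or_forall_ne isOpen_Ioi h₂.continuousOn
    fun t ht hzero => eventually_eq_zero_of_two_mul_deriv_eq (f' := deriv φ₂) (g' := deriv φ₁) ?_
      (fun h => hne t ht ⟨h, hzero⟩) hzero
  filter_upwards [Ioi_mem_nhds ht] with s hs
  exact ⟨hderiv φ₂ h₂ s hs, hderiv φ₁ h₁ s hs, hode s hs⟩
end

section
/- Let α₁, α₂ : (0,∞) → ℝ be continuous such that for every t > 0 not both α₁(t) = 0 and α₂(t) = 0, and suppose there is a constant a ∈ ℝ such that α₂(t) = a·√t·α₁(t) whenever α₁(t) ≠ 0 and α₂(t) ≠ 0. Then either α₁(t) ≠ 0 for all t > 0, or α₁(t) = 0 for all t > 0. -/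
open Filter Topology

/-- If `α₁` vanishes at `t₀ > 0`, it vanishes in a neighbourhood of `t₀`. -/
lemma alpha1_locally_zero (α₁ α₂ : ℝ → ℝ)
    (h₁ : ContinuousOn α₁ (Set.Ioi 0))
    (h₂ : ContinuousOn α₂ (Set.Ioi 0))
    (hne : ∀ t : ℝ, 0 < t → ¬(α₁ t = 0 ∧ α₂ t = 0))
    (a : ℝ)
    (hrel : ∀ t : ℝ, 0 < t → α₁ t ≠ 0 → α₂ t ≠ 0 → α₂ t = a * Real.sqrt t * α₁ t)
    (t₀ : ℝ) (ht₀ : 0 < t₀) (h0 : α₁ t₀ = 0) :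
    ∀ᶠ t in 𝓝 t₀, α₁ t = 0 := by
  by_contra hfreq
  rw [Filter.not_eventually] at hfreq
  have hα₂ : α₂ t₀ ≠ 0 := fun h => hne t₀ ht₀ ⟨h0, h⟩
  have hIoi : Set.Ioi (0:ℝ) ∈ 𝓝 t₀ := isOpen_Ioi.mem_nhds ht₀
  have hc1 : ContinuousAt α₁ t₀ := h₁.continuousAt hIoi
  have hc2 : ContinuousAt α₂ t₀ := h₂.continuousAt hIoi
  set g : ℝ → ℝ := fun t => α₂ t - a * Real.sqrt t * α₁ t with hg_def
  have hg : ContinuousAt g t₀ :=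
    hc2.sub (((continuousAt_const.mul (Real.continuous_sqrt.continuousAt)).mul hc1))
  have hev : ∀ᶠ t in 𝓝 t₀, α₂ t ≠ 0 ∧ 0 < t :=
    (hc2.eventually_ne hα₂).and hIoi
  have hfreq' : ∃ᶠ t in 𝓝 t₀, g t = 0 := by
    refine (hfreq.and_eventually hev).mono ?_
    rintro t ⟨h1, h2, h3⟩
    simp [hg_def, hrel t h3 h1 h2]
  -- conclude g t₀ = 0 by continuity
  have hl : (𝓝 t₀ ⊓ 𝓟 {t | g t = 0}).NeBot := ((Filter.frequently_iff_neBot).mp (by simpa [Set.mem_setOf_eq] using hfreq'))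
  have ht1 : Tendsto g (𝓝 t₀ ⊓ 𝓟 {t | g t = 0}) (𝓝 (g t₀)) :=
    hg.tendsto.mono_left inf_le_left
  have ht2 : Tendsto g (𝓝 t₀ ⊓ 𝓟 {t | g t = 0}) (𝓝 0) := by
    refine Tendsto.congr' ?_ tendsto_const_nhds
    exact eventually_inf_principal.2 (Eventually.of_forall fun t ht => ht.symm)
  have hgz : g t₀ = 0 := tendsto_nhds_unique ht1 ht2
  apply hα₂
  have : g t₀ = α₂ t₀ := by simp [hg_def, h0]
  rw [← this, hgz]

/-- Dichotomy lemma from the Liouville field theorem: if `α₁, α₂` are continuous on `(0,∞)`,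
never vanish simultaneously there, and `α₂ = a √t α₁` wherever both are nonzero, then either
`α₁` never vanishes on `(0,∞)` or it vanishes identically there. -/
theorem alpha1_dichotomy (α₁ α₂ : ℝ → ℝ)
    (h₁ : ContinuousOn α₁ (Set.Ioi 0))
    (h₂ : ContinuousOn α₂ (Set.Ioi 0))
    (hne : ∀ t : ℝ, 0 < t → ¬(α₁ t = 0 ∧ α₂ t = 0))
    (a : ℝ)
    (hrel : ∀ t : ℝ, 0 < t → α₁ t ≠ 0 → α₂ t ≠ 0 → α₂ t = a * Real.sqrt t * α₁ t) :
    (∀ t : ℝ, 0 < t → α₁ t ≠ 0) ∨ (∀ t : ℝ, 0 < t → α₁ t = 0) := by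
  haveI : PreconnectedSpace (Set.Ioi (0:ℝ)) :=
    Subtype.preconnectedSpace isPreconnected_Ioi
  set S : Set (Set.Ioi (0:ℝ)) := {x | α₁ ↑x = 0} with hS_def
  have hSclosed : IsClosed S := by
    have : Continuous ((Set.Ioi (0:ℝ)).restrict α₁) := h₁.restrict
    exact isClosed_eq this continuous_const
  have hSopen : IsOpen S := by
    rw [isOpen_iff_mem_nhds]
    intro x hx
    have hkey : ∀ᶠ t in 𝓝 (x : ℝ), α₁ t = 0 :=
      alpha1_locally_zero α₁ α₂ h₁ h₂ hne a hrel x x.2 hx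
    rw [nhds_induced]
    exact Filter.preimage_mem_comap hkey
  rcases isClopen_iff.mp ⟨hSclosed, hSopen⟩ with h | h
  · left
    intro t ht ht0
    have : (⟨t, ht⟩ : Set.Ioi (0:ℝ)) ∈ S := ht0
    rw [h] at this
    exact this
  · right
    intro t ht
    have : (⟨t, ht⟩ : Set.Ioi (0:ℝ)) ∈ S := h ▸ Set.mem_univ _
    exact this
end

section
/- Let α₁, α₂, α₁₃, β₁, β₂, β₁₃ : (0,∞) → ℝ be continuously differentiable and θ : (0,∞) → ℝ any function. Define φ₁(t) := α₁(t) + t·β₁(t), φ₂(t) := α₂(t) + t·β₂(t), φ₁₃(t) := α₁₃(t) + t·β₁₃(t), and assume α₁(t)·α₁₃(t) − α₂(t)² ≠ 0 and φ₁(t)·φ₁₃(t) − φ₂(t)² ≠ 0 for all t > 0. Suppose for all t > 0: θ(t)·α₁₃(t) = t·α₁₃'(t); 2·θ(t)·α₂(t) = 2·t·α₂'(t) + α₂(t); θ(t)·α₁(t) = t·α₁'(t) + α₁(t); θ(t)·φ₁₃(t) = t·φ₁₃'(t); 2·θ(t)·φ₂(t) = 2·t·φ₂'(t) + φ₂(t);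 θ(t)·φ₁(t) = t·φ₁'(t) + φ₁(t). Then there exist a differentiable function λ : (0,∞) → ℝ with λ(t) ≠ 0 for all t > 0, and constants a₁,a₂,a₃,b₁,b₂,b₃ ∈ ℝ with a₁·a₃ − a₂² ≠ 0 and (a₁+b₁)(a₃+b₃) − (a₂+b₂)² ≠ 0, such that for all t > 0: α₁(t) = a₁·λ(t), α₂(t) = a₂·√t·λ(t), α₁₃(t) = a₃·t·λ(t), β₁(t) = b₁·λ(t)/t, β₂(t) = b₂·λ(t)/√t, β₁₃(t) = b₃·λ(t), and moreover θ(t) = 1 + t·λ'(t)/λ(t). -/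
/-!
Each equation of the system says that a coefficient solves an Euler-type equation `t f' = c f`
with `c` one of `θ - 1`, `θ - 1/2`, `θ`, and two solutions of the same equation, one of them
nonvanishing, have constant ratio. The determinant `D = α₁ α₁₃ - α₂²` solves `t D' = (2θ - 1) D` and
never vanishes, so `λ = √(|D| / t)` is a positive solution for `θ - 1`, and `√t λ`, `t λ` are
solutions for `θ - 1/2`, `θ`. Evaluating at `t = 1` transfers the determinant conditions to the
constants.
-/

open Set

/-- `f` solves `t f'(t) = c(t) f(t)` on `(0, ∞)`, differentiability included. -/
def EulerEq (c f : ℝ → ℝ) : Prop :=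
  ∀ t, 0 < t → HasDerivAt f (c t * f t / t) t

namespace EulerEq

variable {c d f g w α β : ℝ → ℝ}

theorem of_contDiffOn (hf : ContDiffOn ℝ 1 f (Ioi 0))
    (h : ∀ t, 0 < t → t * deriv f t = c t * f t) : EulerEq c f := fun t ht =>
  ((hf.differentiableOn one_ne_zero).differentiableAt (Ioi_mem_nhds ht)).hasDerivAt.congr_deriv
    (by rw [← h t ht]; field_simp)

theorem congr_coeff (hf : EulerEq c f) (h : ∀ t, 0 < t → c t = d t) : EulerEq d f :=
  fun t ht => h t ht ▸ hf t ht

theorem coeff_eq (hf : EulerEq c f) {t : ℝ} (ht : 0 < t) (hft : f t ≠ 0) :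
    c t = t * deriv f t / f t := by
  rw [(hf t ht).deriv]
  field_simp

theorem mul (hf : EulerEq c f) (hg : EulerEq d g) :
    EulerEq (fun t => c t + d t) (fun t => f t * g t) := fun t ht =>
  ((hf t ht).mul (hg t ht)).congr_deriv (by ring)

theorem sub (hf : EulerEq c f) (hg : EulerEq c g) : EulerEq c (fun t => f t - g t) :=
  fun t ht => ((hf t ht).sub (hg t ht)).congr_deriv (by ring)

theorem div (hf : EulerEq c f) (hg : EulerEq d g) (hg0 : ∀ t, 0 < t → g t ≠ 0) :
    EulerEq (fun t => c t - d t) (fun t => f t / g t) := fun t ht =>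
  ((hf t ht).div (hg t ht) (hg0 t ht)).congr_deriv (by field_simp)

theorem abs (hf : EulerEq c f) (hf0 : ∀ t, 0 < t → f t ≠ 0) :
    EulerEq c (fun t => |f t|) := fun t ht =>
  ((hasDerivAt_abs (hf0 t ht)).comp t (hf t ht)).congr_deriv
    (by simp only [← sign_mul_self]; ring)

theorem sqrt (hf : EulerEq c f) (hf0 : ∀ t, 0 < t → 0 < f t) :
    EulerEq (fun t => c t / 2) (fun t => √(f t)) := fun t ht =>
  ((hf t ht).sqrt (hf0 t ht).ne').congr_deriv (by
    have hs : √(f t) ≠ 0 := (Real.sqrt_pos.mpr (hf0 t ht)).ne'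
    field_simp
    rw [Real.sq_sqrt (hf0 t ht).le])

theorem exists_eq_const_mul (hf : EulerEq c f) (hw : EulerEq c w)
    (hw0 : ∀ t, 0 < t → w t ≠ 0) : ∃ a, ∀ t, 0 < t → f t = a * w t := by
  have hratio : EulerEq (fun t => c t - c t) (fun t => f t / w t) := hf.div hw hw0
  obtain ⟨a, ha⟩ := isOpen_Ioi.exists_is_const_of_deriv_eq_zero isPreconnected_Ioi
    (fun t ht => (hratio t ht).differentiableAt.differentiableWithinAt)
    (fun t ht => by simp [(hratio t ht).deriv])
  exact ⟨a, fun t ht => by rw [← ha t ht, div_mul_cancel₀ _ (hw0 t ht)]⟩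

theorem exists_eq_mul_of_add_mul (hα : EulerEq c α) (hφ : EulerEq c (fun t => α t + t * β t))
    (hw : EulerEq c w) (hw0 : ∀ t, 0 < t → w t ≠ 0) :
    ∃ a b, ∀ t, 0 < t → α t = a * w t ∧ t * β t = b * w t := by
  obtain ⟨a, ha⟩ := hα.exists_eq_const_mul hw hw0
  obtain ⟨p, hp⟩ := hφ.exists_eq_const_mul hw hw0
  exact ⟨a, p - a, fun t ht => ⟨ha t ht, by linear_combination hp t ht - ha t ht⟩⟩

end EulerEq

theorem eulerEq_id : EulerEq (fun _ => 1) (fun t => t) := fun t ht =>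
  (hasDerivAt_id t).congr_deriv (by field_simp)

theorem exists_pos_eulerEq_of_det_ne_zero {c α₁ α₂ α₃ : ℝ → ℝ}
    (h₁ : EulerEq (fun t => c t - 1) α₁) (h₂ : EulerEq (fun t => c t - 1 / 2) α₂)
    (h₃ : EulerEq c α₃) (hdet : ∀ t, 0 < t → α₁ t * α₃ t - α₂ t ^ 2 ≠ 0) :
    ∃ lam, EulerEq (fun t => c t - 1) lam ∧ ∀ t, 0 < t → 0 < lam t := by
  have hD : EulerEq (fun t => c t - 1 + c t) (fun t => α₁ t * α₃ t - α₂ t * α₂ t) :=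
    (h₁.mul h₃).sub ((h₂.mul h₂).congr_coeff fun t _ => by ring)
  have hD0 : ∀ t, 0 < t → α₁ t * α₃ t - α₂ t * α₂ t ≠ 0 := fun t ht => by
    simpa only [sq] using hdet t ht
  have hpos : ∀ t, 0 < t → 0 < |α₁ t * α₃ t - α₂ t * α₂ t| / t := fun t ht =>
    div_pos (abs_pos.mpr (hD0 t ht)) ht
  exact ⟨_, ((hD.abs hD0).div eulerEq_id fun t ht => ht.ne').sqrt hpos
    |>.congr_coeff fun t _ => by ring, fun t ht => Real.sqrt_pos.mpr (hpos t ht)⟩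

theorem mul_sub_sq_ne_zero_of_eq_mul {x y z a b c l : ℝ} (hx : x = a * l) (hy : y = b * l)
    (hz : z = c * l) (h : x * z - y ^ 2 ≠ 0) : a * c - b ^ 2 ≠ 0 := fun hd =>
  h (by rw [hx, hy, hz]; linear_combination l ^ 2 * hd)

theorem exists_coeffs_of_eulerEq {c lam α₁ α₂ α₃ β₁ β₂ β₃ : ℝ → ℝ}
    (hlam : EulerEq (fun t => c t - 1) lam) (hlam0 : ∀ t, 0 < t → lam t ≠ 0)
    (h₁ : EulerEq (fun t => c t - 1) α₁) (h₂ : EulerEq (fun t => c t - 1 / 2) α₂)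
    (h₃ : EulerEq c α₃) (k₁ : EulerEq (fun t => c t - 1) (fun t => α₁ t + t * β₁ t))
    (k₂ : EulerEq (fun t => c t - 1 / 2) (fun t => α₂ t + t * β₂ t))
    (k₃ : EulerEq c (fun t => α₃ t + t * β₃ t)) :
    ∃ a₁ a₂ a₃ b₁ b₂ b₃ : ℝ, ∀ t, 0 < t →
      α₁ t = a₁ * lam t ∧ α₂ t = a₂ * √t * lam t ∧ α₃ t = a₃ * t * lam t ∧
      β₁ t = b₁ * lam t / t ∧ β₂ t = b₂ * lam t / √t ∧ β₃ t = b₃ * lam t := by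
  obtain ⟨a₁, b₁, e₁⟩ := h₁.exists_eq_mul_of_add_mul k₁ hlam hlam0
  obtain ⟨a₂, b₂, e₂⟩ := h₂.exists_eq_mul_of_add_mul k₂
    (((eulerEq_id.sqrt fun _ ht => ht).mul hlam).congr_coeff fun t _ => by ring)
    fun t ht => mul_ne_zero (Real.sqrt_pos.mpr ht).ne' (hlam0 t ht)
  obtain ⟨a₃, b₃, e₃⟩ := h₃.exists_eq_mul_of_add_mul k₃
    ((eulerEq_id.mul hlam).congr_coeff fun t _ => by ring)
    fun t ht => mul_ne_zero ht.ne' (hlam0 t ht)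
  refine ⟨a₁, a₂, a₃, b₁, b₂, b₃, fun t ht => ?_⟩
  obtain ⟨hα₁, hβ₁⟩ := e₁ t ht
  obtain ⟨hα₂, hβ₂⟩ := e₂ t ht
  obtain ⟨hα₃, hβ₃⟩ := e₃ t ht
  have hsqrt : √t * √t = t := Real.mul_self_sqrt ht.le
  refine ⟨hα₁, by rw [hα₂]; ring, by rw [hα₃]; ring, ?_, ?_, ?_⟩
  · rw [eq_div_iff ht.ne']
    linear_combination hβ₁
  · rw [eq_div_iff (Real.sqrt_pos.mpr ht).ne']
    refine mul_left_cancel₀ ht.ne' ?_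
    linear_combination √t * hβ₂ + b₂ * lam t * hsqrt
  · refine mul_left_cancel₀ ht.ne' ?_
    linear_combination hβ₃

/-- Part (1) of the Liouville vector field theorem: the system (Liouv4) (with `α₁₃, β₁₃`
standing for `α₁+α₃, β₁+β₃` and `t` for `r²`) forces the classification (Liouv1) together
with the potential function formula `θ(t) = 1 + t λ'(t)/λ(t)`. -/
theorem liouville_conformal_classification
    (α₁ α₂ α₁₃ β₁ β₂ β₁₃ : ℝ → ℝ) (θ : ℝ → ℝ)
    (hα₁ : ContDiffOn ℝ 1 α₁ (Set.Ioi 0)) (hα₂ : ContDiffOn ℝ 1 α₂ (Set.Ioi 0))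
    (hα₁₃ : ContDiffOn ℝ 1 α₁₃ (Set.Ioi 0)) (hβ₁ : ContDiffOn ℝ 1 β₁ (Set.Ioi 0))
    (hβ₂ : ContDiffOn ℝ 1 β₂ (Set.Ioi 0)) (hβ₁₃ : ContDiffOn ℝ 1 β₁₃ (Set.Ioi 0))
    (hα : ∀ t : ℝ, 0 < t → α₁ t * α₁₃ t - (α₂ t) ^ 2 ≠ 0)
    (hφ : ∀ t : ℝ, 0 < t →
      (α₁ t + t * β₁ t) * (α₁₃ t + t * β₁₃ t) - (α₂ t + t * β₂ t) ^ 2 ≠ 0)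
    (hsys : ∀ t : ℝ, 0 < t →
      θ t * α₁₃ t = t * deriv α₁₃ t ∧
      2 * θ t * α₂ t = 2 * t * deriv α₂ t + α₂ t ∧
      θ t * α₁ t = t * deriv α₁ t + α₁ t ∧
      θ t * (α₁₃ t + t * β₁₃ t) = t * deriv (fun s => α₁₃ s + s * β₁₃ s) t ∧
      2 * θ t * (α₂ t + t * β₂ t) =
        2 * t * deriv (fun s => α₂ s + s * β₂ s) t + (α₂ t + t * β₂ t) ∧
      θ t * (α₁ t + t * β₁ t) =
        t * deriv (fun s => α₁ s + s * β₁ s) t + (α₁ t + t * β₁ t)) :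
    ∃ lam : ℝ → ℝ,
      (∀ t : ℝ, 0 < t → DifferentiableAt ℝ lam t) ∧
      (∀ t : ℝ, 0 < t → lam t ≠ 0) ∧
      ∃ a₁ a₂ a₃ b₁ b₂ b₃ : ℝ,
        a₁ * a₃ - a₂ ^ 2 ≠ 0 ∧
        (a₁ + b₁) * (a₃ + b₃) - (a₂ + b₂) ^ 2 ≠ 0 ∧
        ∀ t : ℝ, 0 < t →
          α₁ t = a₁ * lam t ∧
          α₂ t = a₂ * Real.sqrt t * lam t ∧
          α₁₃ t = a₃ * t * lam t ∧
          β₁ t = b₁ * lam t / t ∧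
          β₂ t = b₂ * lam t / Real.sqrt t ∧
          β₁₃ t = b₃ * lam t ∧
          θ t = 1 + t * deriv lam t / lam t := by
  have e₁ : EulerEq (fun t => θ t - 1) α₁ := .of_contDiffOn hα₁ fun t ht => by
    linear_combination -(hsys t ht).2.2.1
  have e₂ : EulerEq (fun t => θ t - 1 / 2) α₂ := .of_contDiffOn hα₂ fun t ht => by
    linear_combination -(hsys t ht).2.1 / 2
  have e₁₃ : EulerEq θ α₁₃ := .of_contDiffOn hα₁₃ fun t ht => by
    linear_combination -(hsys t ht).1
  have f₁ : EulerEq (fun t => θ t - 1) (fun t => α₁ t + t * β₁ t) :=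
    .of_contDiffOn (hα₁.add (contDiffOn_id.mul hβ₁)) fun t ht => by
      linear_combination -(hsys t ht).2.2.2.2.2
  have f₂ : EulerEq (fun t => θ t - 1 / 2) (fun t => α₂ t + t * β₂ t) :=
    .of_contDiffOn (hα₂.add (contDiffOn_id.mul hβ₂)) fun t ht => by
      linear_combination -(hsys t ht).2.2.2.2.1 / 2
  have f₁₃ : EulerEq θ (fun t => α₁₃ t + t * β₁₃ t) :=
    .of_contDiffOn (hα₁₃.add (contDiffOn_id.mul hβ₁₃)) fun t ht => by
      linear_combination -(hsys t ht).2.2.2.1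
  obtain ⟨lam, hlam, hlam_pos⟩ := exists_pos_eulerEq_of_det_ne_zero e₁ e₂ e₁₃ hα
  have hlam0 : ∀ t, 0 < t → lam t ≠ 0 := fun t ht => (hlam_pos t ht).ne'
  obtain ⟨a₁, a₂, a₃, b₁, b₂, b₃, h⟩ := exists_coeffs_of_eulerEq hlam hlam0 e₁ e₂ e₁₃ f₁ f₂ f₁₃
  obtain ⟨k₁, k₂, k₃, k₄, k₅, k₆⟩ := h 1 one_pos
  simp only [Real.sqrt_one, mul_one, div_one] at k₂ k₃ k₄ k₅
  refine ⟨lam, fun t ht => (hlam t ht).differentiableAt, hlam0, a₁, a₂, a₃, b₁, b₂, b₃,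
    mul_sub_sq_ne_zero_of_eq_mul k₁ k₂ k₃ (hα 1 one_pos),
    mul_sub_sq_ne_zero_of_eq_mul (l := lam 1) (by linear_combination k₁ + k₄)
      (by linear_combination k₂ + k₅) (by linear_combination k₃ + k₆) (hφ 1 one_pos),
    fun t ht => ?_⟩
  obtain ⟨hα₁t, hα₂t, hα₁₃t, hβ₁t, hβ₂t, hβ₁₃t⟩ := h t ht
  exact ⟨hα₁t, hα₂t, hα₁₃t, hβ₁t, hβ₂t, hβ₁₃t, by linarith [hlam.coeff_eq ht (hlam0 t ht)]⟩
end

section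
/- Let θ₀ ∈ ℝ, let α₁, α₂, α₁₃, β₁, β₂, β₁₃ : (0,∞) → ℝ be continuously differentiable, define φ₁(t) := α₁(t) + t·β₁(t), φ₂(t) := α₂(t) + t·β₂(t), φ₁₃(t) := α₁₃(t) + t·β₁₃(t), and assume α₁(t)·α₁₃(t) − α₂(t)² ≠ 0 and φ₁(t)·φ₁₃(t) − φ₂(t)² ≠ 0 for all t > 0. Suppose for all t > 0: θ₀·α₁₃(t) = t·α₁₃'(t); 2·θ₀·α₂(t) = 2·t·α₂'(t) + α₂(t); θ₀·α₁(t) = t·α₁'(t) + α₁(t); θ₀·φ₁₃(t) = t·φ₁₃'(t); 2·θ₀·φ₂(t) = 2·t·φ₂'(t) + φ₂(t); θ₀·φ₁(t) = t·φ₁'(t) + φ₁(t). Then there exist constants a₁,a₂,a₃,b₁,b₂,b₃ ∈ ℝ with a₁·a₃ − a₂² ≠ 0 and (a₁+b₁)(a₃+b₃) − (a₂+b₂)² ≠ 0, such that for all t > 0 (real powers): α₁(t) = a₁·t^(θ₀−1), α₂(t) = a₂·t^(θ₀−1/2), α₁₃(t) = a₃·t^θ₀, β₁(t) = b₁·t^(θ₀−2),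 β₂(t) = b₂·t^(θ₀−3/2), β₁₃(t) = b₃·t^(θ₀−1). -/
/-!
Each of the six equations is an Euler equation `t f' = c f` on `(0, ∞)`, whose solutions are
exactly `f 1 * t ^ c` since `f t * t ^ (-c)` has zero derivative. This pins down `α₁, α₂, α₁₃`
and the combinations `αᵢ + t βᵢ`; dividing the difference by `t` gives the `βᵢ`. The two
nondegeneracy conditions of the conclusion are the hypotheses at `t = 1`.
-/

open Set

theorem eq_mul_rpow_of_mul_deriv_eq {f : ℝ → ℝ} {c : ℝ} (hf : DifferentiableOn ℝ f (Ioi 0))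
    (hode : ∀ t, 0 < t → t * deriv f t = c * f t) : ∀ t, 0 < t → f t = f 1 * t ^ c := by
  have hderiv : ∀ s ∈ Ioi (0 : ℝ), HasDerivAt (fun s => f s * s ^ (-c)) 0 s := by
    intro s hs
    have hs₀ : s ≠ 0 := (mem_Ioi.mp hs).ne'
    refine ((hf.differentiableAt (isOpen_Ioi.mem_nhds hs)).hasDerivAt.mul
      (Real.hasDerivAt_rpow_const (p := -c) (Or.inl hs₀))).congr_deriv ?_
    rw [Real.rpow_sub_one hs₀]
    field_simp
    linear_combination s ^ (-c) * hode s hs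
  intro t ht
  have hconst : f t * t ^ (-c) = f 1 * 1 ^ (-c) :=
    isOpen_Ioi.is_const_of_deriv_eq_zero isPreconnected_Ioi
      (fun s hs => (hderiv s hs).differentiableAt.differentiableWithinAt)
      (fun s hs => (hderiv s hs).deriv) (mem_Ioi.mpr ht) (mem_Ioi.mpr one_pos)
  rw [Real.one_rpow, mul_one, Real.rpow_neg ht.le, ← div_eq_mul_inv,
    div_eq_iff (Real.rpow_pos_of_pos ht c).ne'] at hconst
  exact hconst

theorem eq_mul_rpow_of_add_mul_eq {a b x y t c d : ℝ} (ht : 0 < t) (hcd : c = d + 1)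
    (hx : x = a * t ^ c) (hxy : x + t * y = (a + b) * t ^ c) : y = b * t ^ d := by
  rw [hcd, Real.rpow_add_one ht.ne'] at hx hxy
  apply mul_left_cancel₀ ht.ne'
  linear_combination hxy - hx

/-- Part (2) of the Liouville vector field theorem: the system (Liouv4) with constant
potential `θ₀` (with `α₁₃, β₁₃` standing for `α₁+α₃, β₁+β₃` and `t` for `r²`) forces the
classification (Liouv2). -/
theorem liouville_homothetic_classification (θ₀ : ℝ)
    (α₁ α₂ α₁₃ β₁ β₂ β₁₃ : ℝ → ℝ)
    (hα₁ : ContDiffOn ℝ 1 α₁ (Set.Ioi 0)) (hα₂ : ContDiffOn ℝ 1 α₂ (Set.Ioi 0))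
    (hα₁₃ : ContDiffOn ℝ 1 α₁₃ (Set.Ioi 0)) (hβ₁ : ContDiffOn ℝ 1 β₁ (Set.Ioi 0))
    (hβ₂ : ContDiffOn ℝ 1 β₂ (Set.Ioi 0)) (hβ₁₃ : ContDiffOn ℝ 1 β₁₃ (Set.Ioi 0))
    (hα : ∀ t : ℝ, 0 < t → α₁ t * α₁₃ t - (α₂ t) ^ 2 ≠ 0)
    (hφ : ∀ t : ℝ, 0 < t →
      (α₁ t + t * β₁ t) * (α₁₃ t + t * β₁₃ t) - (α₂ t + t * β₂ t) ^ 2 ≠ 0)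
    (hsys : ∀ t : ℝ, 0 < t →
      θ₀ * α₁₃ t = t * deriv α₁₃ t ∧
      2 * θ₀ * α₂ t = 2 * t * deriv α₂ t + α₂ t ∧
      θ₀ * α₁ t = t * deriv α₁ t + α₁ t ∧
      θ₀ * (α₁₃ t + t * β₁₃ t) = t * deriv (fun s => α₁₃ s + s * β₁₃ s) t ∧
      2 * θ₀ * (α₂ t + t * β₂ t) =
        2 * t * deriv (fun s => α₂ s + s * β₂ s) t + (α₂ t + t * β₂ t) ∧
      θ₀ * (α₁ t + t * β₁ t) =
        t * deriv (fun s => α₁ s + s * β₁ s) t + (α₁ t + t * β₁ t)) :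
    ∃ a₁ a₂ a₃ b₁ b₂ b₃ : ℝ,
      a₁ * a₃ - a₂ ^ 2 ≠ 0 ∧
      (a₁ + b₁) * (a₃ + b₃) - (a₂ + b₂) ^ 2 ≠ 0 ∧
      ∀ t : ℝ, 0 < t →
        α₁ t = a₁ * t ^ (θ₀ - 1) ∧
        α₂ t = a₂ * t ^ (θ₀ - 1 / 2) ∧
        α₁₃ t = a₃ * t ^ θ₀ ∧
        β₁ t = b₁ * t ^ (θ₀ - 2) ∧
        β₂ t = b₂ * t ^ (θ₀ - 3 / 2) ∧
        β₁₃ t = b₃ * t ^ (θ₀ - 1) := by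
  have hdiff {f : ℝ → ℝ} (hf : ContDiffOn ℝ 1 f (Ioi 0)) : DifferentiableOn ℝ f (Ioi 0) :=
    hf.differentiableOn one_ne_zero
  have hdiff_add {α β : ℝ → ℝ} (hα : ContDiffOn ℝ 1 α (Ioi 0)) (hβ : ContDiffOn ℝ 1 β (Ioi 0)) :
      DifferentiableOn ℝ (fun s => α s + s * β s) (Ioi 0) :=
    hdiff (hα.add (contDiffOn_id.mul hβ))
  have e₁₃ := eq_mul_rpow_of_mul_deriv_eq (hdiff hα₁₃) fun t ht => by linarith [(hsys t ht).1]
  have e₂ := eq_mul_rpow_of_mul_deriv_eq (c := θ₀ - 1 / 2) (hdiff hα₂) fun t ht => by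
    linarith [(hsys t ht).2.1]
  have e₁ := eq_mul_rpow_of_mul_deriv_eq (c := θ₀ - 1) (hdiff hα₁) fun t ht => by
    linarith [(hsys t ht).2.2.1]
  have f₁₃ := eq_mul_rpow_of_mul_deriv_eq (hdiff_add hα₁₃ hβ₁₃) fun t ht => by
    linarith [(hsys t ht).2.2.2.1]
  have f₂ := eq_mul_rpow_of_mul_deriv_eq (c := θ₀ - 1 / 2) (hdiff_add hα₂ hβ₂) fun t ht => by
    linarith [(hsys t ht).2.2.2.2.1]
  have f₁ := eq_mul_rpow_of_mul_deriv_eq (c := θ₀ - 1) (hdiff_add hα₁ hβ₁) fun t ht => by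
    linarith [(hsys t ht).2.2.2.2.2]
  simp only [one_mul] at f₁₃ f₂ f₁
  refine ⟨α₁ 1, α₂ 1, α₁₃ 1, β₁ 1, β₂ 1, β₁₃ 1, hα 1 one_pos, by simpa using hφ 1 one_pos,
    fun t ht => ⟨e₁ t ht, e₂ t ht, e₁₃ t ht, ?_, ?_, ?_⟩⟩
  · exact eq_mul_rpow_of_add_mul_eq ht (by ring) (e₁ t ht) (f₁ t ht)
  · exact eq_mul_rpow_of_add_mul_eq ht (by ring) (e₂ t ht) (f₂ t ht)
  · exact eq_mul_rpow_of_add_mul_eq ht (by ring) (e₁₃ t ht) (f₁₃ t ht)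
end
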